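/- arXiv:1107.5552 — 2 statements merged into one kernel-verified Lean document; each statement's English description precedes it below -/
import Mathlib

section
/- Let G=(V,D,B) be a mixed graph. (1) There exists a family (Y_v : v∈V) of subsets of V such that each Y_v satisfies the weak half-trek criterion with respect to v and a total ordering ≺ on V with w≺v whenever w∈Y_v∩htr(v), if and only if G is HTC-identifiable. (2) Every family (Y_v : v∈V) of subsets of V either contains a set Y_v failing the weak half-trek criterion with respect to v or contains a pair (Y_v,Y_w) with v∈Y_w and w∈Y_v, if and only if G is HTC-infinite-to-one. -/
open scoped Classical Matrix

/-- A mixed graph `G = (V, D, B)`: a finite vertex set `V`, a set `D` of directed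
edges, and a symmetric set `B` of bidirected edges; no self-loops. -/
structure MixedGraph (V : Type*) [Fintype V] [DecidableEq V] where
  D : Finset (V × V)
  B : Finset (V × V)
  B_symm : ∀ v w : V, (v, w) ∈ B → (w, v) ∈ B
  D_irrefl : ∀ v : V, (v, v) ∉ D
  B_irrefl : ∀ v : V, (v, v) ∉ B

namespace MixedGraph

variable {V : Type*} [Fintype V] [DecidableEq V]

/-- The parents of `v`: nodes `w` with `w → v ∈ D`. -/
def pa (G : MixedGraph V) (v : V) : Finset V :=
  Finset.univ.filter fun w => (w, v) ∈ G.D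

/-- The siblings of `v`: nodes `w` with `w ↔ v ∈ B`. -/
def sib (G : MixedGraph V) (v : V) : Finset V :=
  Finset.univ.filter fun w => (w, v) ∈ G.B

/-- A trek: a walk with no colliding arrowheads.  The field `left` lists the nodes of the
left-hand side from top (head) to source (last); `right` lists the nodes of the right-hand
side from top (head) to target (last); consecutive nodes in each list are joined by directed
edges pointing away from the head.  If `hasBidir` then the two heads are joined by a
bidirected edge, otherwise they coincide (the top node). -/
structure Trek (G : MixedGraph V) where
  left : List V
  right : List V
  left_ne : left ≠ []
  right_ne : right ≠ []
  hasBidir : Bool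
  left_chain : left.Chain' fun a b => (a, b) ∈ G.D
  right_chain : right.Chain' fun a b => (a, b) ∈ G.D
  head_cond : if hasBidir then (left.head left_ne, right.head right_ne) ∈ G.B
              else left.head left_ne = right.head right_ne

namespace Trek

variable {G : MixedGraph V}

/-- The source of a trek. -/
def source (π : G.Trek) : V := π.left.getLast π.left_ne

/-- The target of a trek. -/
def target (π : G.Trek) : V := π.right.getLast π.right_ne

/-- The left-hand side `Left(π)` of a trek, as a set of nodes. -/
def leftSet (π : G.Trek) : Finset V := π.left.toFinset

/-- The right-hand side `Right(π)` of a trek, as a set of nodes. -/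
def rightSet (π : G.Trek) : Finset V := π.right.toFinset

/-- A half-trek is a trek whose left-hand side consists of exactly one node. -/
def IsHalfTrek (π : G.Trek) : Prop := π.leftSet.card = 1

/-- The number of directed edges traversed by the trek. -/
def nEdges (π : G.Trek) : ℕ := (π.left.length - 1) + (π.right.length - 1)

end Trek

/-- `htr v`: the set of nodes `w ∉ {v} ∪ sib(v)` reachable from `v` by a half-trek
containing at least one directed edge. -/
def htr (G : MixedGraph V) (v : V) : Set V :=
  {w | w ≠ v ∧ w ∉ G.sib v ∧
    ∃ π : G.Trek, π.source = v ∧ π.target = w ∧ π.IsHalfTrek ∧ 1 ≤ π.nEdges}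

/-- `f` encodes a system of treks from `Y` to `P`: treks with pairwise distinct sources
forming `Y` and pairwise distinct targets forming `P`. -/
def IsTrekSystem (G : MixedGraph V) (Y P : Finset V) (f : V → G.Trek) : Prop :=
  (∀ y ∈ Y, (f y).source = y) ∧
  (Y.image fun y => (f y).target) = P ∧
  ∀ y ∈ Y, ∀ y' ∈ Y, y ≠ y' → (f y).target ≠ (f y').target

/-- The treks `f y`, `y ∈ Y`, have no sided intersection. -/
def NoSidedIntersection (G : MixedGraph V) (Y : Finset V) (f : V → G.Trek) : Prop :=
  ∀ y ∈ Y, ∀ y' ∈ Y, y ≠ y' →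
    Disjoint (f y).leftSet (f y').leftSet ∧ Disjoint (f y).rightSet (f y').rightSet

/-- `Y` satisfies the half-trek criterion with respect to `v`. -/
def SatisfiesHTC (G : MixedGraph V) (v : V) (Y : Finset V) : Prop :=
  Y.card = (G.pa v).card ∧
  (∀ y ∈ Y, y ≠ v ∧ y ∉ G.sib v) ∧
  ∃ f : V → G.Trek, (∀ y ∈ Y, (f y).IsHalfTrek) ∧
    G.IsTrekSystem Y (G.pa v) f ∧ G.NoSidedIntersection Y f

/-- `Y` satisfies the weak half-trek criterion with respect to `v`. -/
def SatisfiesWeakHTC (G : MixedGraph V) (v : V) (Y : Finset V) : Prop :=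
  Y.card = (G.pa v).card ∧
  (∀ y ∈ Y, y ≠ v ∧ y ∉ G.sib v) ∧
  ∃ f : V → G.Trek, (∀ y ∈ Y, y ∈ G.htr v → (f y).IsHalfTrek) ∧
    G.IsTrekSystem Y (G.pa v) f ∧ G.NoSidedIntersection Y f

/-- `G` is HTC-identifiable. -/
def HTCIdentifiable (G : MixedGraph V) : Prop :=
  ∃ Y : V → Finset V,
    (∀ v, G.SatisfiesHTC v (Y v)) ∧
    ∃ r : V → V → Prop, IsStrictTotalOrder V r ∧
      ∀ v w, w ∈ Y v → w ∈ G.htr v → r w v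

/-- `G` is HTC-infinite-to-one. -/
def HTCInfiniteToOne (G : MixedGraph V) : Prop :=
  ∀ Y : V → Finset V,
    (∃ v, ¬ G.SatisfiesHTC v (Y v)) ∨ ∃ v w, v ∈ Y w ∧ w ∈ Y v

/-- `G` is acyclic: no directed cycle can be formed from the edges in `D`. -/
def Acyclic (G : MixedGraph V) : Prop :=
  ∀ v : V, ¬ Relation.TransGen (fun a b => (a, b) ∈ G.D) v v

/-- `G` is simple: at most one edge between any pair of nodes. -/
def Simple (G : MixedGraph V) : Prop :=
  (∀ e ∈ G.D, e ∉ G.B) ∧ ∀ v w : V, (v, w) ∈ G.D → (w, v) ∉ G.D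

/-- `ℝ^D_reg`: real matrices supported on `D` with `I - Λ` invertible. -/
def RDreg (G : MixedGraph V) : Set (Matrix V V ℝ) :=
  {Λ | (∀ v w, (v, w) ∉ G.D → Λ v w = 0) ∧ IsUnit (1 - Λ).det}

/-- `PD(B)`: positive definite symmetric matrices supported on the diagonal and `B`. -/
def PDB (G : MixedGraph V) : Set (Matrix V V ℝ) :=
  {Ω | Ω.PosDef ∧ ∀ v w, v ≠ w → (v, w) ∉ G.B → Ω v w = 0}

/-- The parameter space `Θ = ℝ^D_reg × PD(B)`. -/
def Theta (G : MixedGraph V) : Set (Matrix V V ℝ × Matrix V V ℝ) :=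
  {θ | θ.1 ∈ G.RDreg ∧ θ.2 ∈ G.PDB}

/-- The parametrization `φ(Λ, Ω) = (I-Λ)^{-T} Ω (I-Λ)^{-1}`. -/
noncomputable def phi {R : Type*} [CommRing R] (Λ Ω : Matrix V V R) : Matrix V V R :=
  ((1 - Λ)⁻¹)ᵀ * Ω * (1 - Λ)⁻¹

/-- Evaluation of a polynomial in the coordinates `λ_vw` (left summand) and `ω_vw`
(right summand) at a parameter point `θ = (Λ, Ω)`. -/
noncomputable def evalParam (θ : Matrix V V ℝ × Matrix V V ℝ)
    (p : MvPolynomial ((V × V) ⊕ (V × V)) ℝ) : ℝ :=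
  MvPolynomial.eval (Sum.elim (fun e => θ.1 e.1 e.2) (fun e => θ.2 e.1 e.2)) p

/-- `V₀` is a proper algebraic subset of `Θ`: the intersection with `Θ` of the zero set of a
polynomial in the coordinates that does not vanish identically on `Θ`. -/
def IsProperAlgebraic (G : MixedGraph V)
    (V₀ : Set (Matrix V V ℝ × Matrix V V ℝ)) : Prop :=
  ∃ p : MvPolynomial ((V × V) ⊕ (V × V)) ℝ,
    (∃ θ ∈ G.Theta, evalParam θ p ≠ 0) ∧
    V₀ = {θ ∈ G.Theta | evalParam θ p = 0}

/-- Evaluation of a polynomial in the entries of a covariance matrix. -/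
noncomputable def evalAtCov (S : Matrix V V ℝ) (p : MvPolynomial (V × V) ℝ) : ℝ :=
  MvPolynomial.eval (fun e => S e.1 e.2) p

/-- `G` is rationally identifiable: some rational map `ψ` (each coordinate a quotient of
polynomials in the entries of the covariance matrix) satisfies `ψ ∘ φ_G = id` off a proper
algebraic subset of `Θ`. -/
def RationallyIdentifiable (G : MixedGraph V) : Prop :=
  ∃ V₀, G.IsProperAlgebraic V₀ ∧
    ∃ p q : ((V × V) ⊕ (V × V)) → MvPolynomial (V × V) ℝ,
      ∀ θ ∈ G.Theta \ V₀,
        (∀ i, evalAtCov (phi θ.1 θ.2) (q i) ≠ 0) ∧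
        (∀ v w : V, θ.1 v w * evalAtCov (phi θ.1 θ.2) (q (Sum.inl (v, w)))
            = evalAtCov (phi θ.1 θ.2) (p (Sum.inl (v, w)))) ∧
        (∀ v w : V, θ.2 v w * evalAtCov (phi θ.1 θ.2) (q (Sum.inr (v, w)))
            = evalAtCov (phi θ.1 θ.2) (p (Sum.inr (v, w))))

/-- `G` is generically identifiable: `φ_G` is injective off a proper algebraic subset. -/
def GenericallyIdentifiable (G : MixedGraph V) : Prop :=
  ∃ V₀, G.IsProperAlgebraic V₀ ∧
    Set.InjOn (fun θ : Matrix V V ℝ × Matrix V V ℝ => phi θ.1 θ.2) (G.Theta \ V₀)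

/-- `φ_G` is generically infinite-to-one. -/
def GenInfiniteToOne (G : MixedGraph V) : Prop :=
  ∃ V₀, G.IsProperAlgebraic V₀ ∧
    ∀ θ ∈ G.Theta \ V₀,
      {θ' ∈ G.Theta | phi θ'.1 θ'.2 = phi θ.1 θ.2}.Infinite

end MixedGraph

/-!
If `y` is not half-trek reachable from `v`, a trek from `y` in a weak half-trek system can be
cut down to the half-trek hanging from its top node `t`: were `t` equal to `v`, a sibling of `v`
or half-trek reachable from `v`, then the directed path from `t` down to `y` would make `y`
half-trek reachable from `v`. No sided intersection keeps the tops of distinct treks distinct,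
so replacing every source by its top turns a weak HTC set into an HTC set with the same
members in `htr v`. For the infinite-to-one part, note that `u ∈ Y_w` for an HTC set `Y_w`
forces `w ∈ htr u`, via the half-trek from `u` to a parent of `w`.
-/

namespace MixedGraph

variable {V : Type*} [Fintype V] [DecidableEq V] {G : MixedGraph V}

@[simp] lemma mem_sib {v w : V} : w ∈ G.sib v ↔ (w, v) ∈ G.B := by simp [sib]

@[simp] lemma mem_pa {v w : V} : w ∈ G.pa v ↔ (w, v) ∈ G.D := by simp [pa]

namespace Trek

def top (π : G.Trek) : V := π.left.head π.left_ne

lemma top_mem_leftSet (π : G.Trek) : π.top ∈ π.leftSet :=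
  List.mem_toFinset.2 (List.head_mem _)

lemma source_mem_leftSet (π : G.Trek) : π.source ∈ π.leftSet :=
  List.mem_toFinset.2 (List.getLast_mem _)

lemma IsHalfTrek.top_eq_source {π : G.Trek} (h : π.IsHalfTrek) : π.top = π.source := by
  obtain ⟨a, ha⟩ := Finset.card_eq_one.1 h
  have htop := π.top_mem_leftSet
  have hsrc := π.source_mem_leftSet
  rw [ha, Finset.mem_singleton] at htop hsrc
  rw [htop, hsrc]

lemma rel_top_of_mem_head?_tail (π : G.Trek) {y : V} (hy : y ∈ π.left.tail.head?) :
    (π.top, y) ∈ G.D := by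
  have h : List.IsChain (fun a b => (a, b) ∈ G.D) (π.top :: π.left.tail) :=
    (List.cons_head_tail π.left_ne).symm ▸ π.left_chain
  exact (List.isChain_cons.1 h).1 y hy

lemma tail_left_ne_nil_of_top_ne_source {π : G.Trek} (h : π.top ≠ π.source) :
    π.left.tail ≠ [] := by
  have key : ∀ (l : List V) (hl : l ≠ []), l.tail = [] → l.head hl = l.getLast hl := by
    rintro (_ | ⟨a, _ | _⟩) hl ht
    exacts [absurd rfl hl, rfl, absurd ht (List.cons_ne_nil _ _)]
  exact fun hnil => h (key _ _ hnil)

def appendRight (π : G.Trek) (l : List V) (hl : l.IsChain fun a b => (a, b) ∈ G.D)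
    (hjoin : ∀ y ∈ l.head?, (π.target, y) ∈ G.D) : G.Trek where
  left := π.left
  right := π.right ++ l
  left_ne := π.left_ne
  right_ne := by simp [π.right_ne]
  hasBidir := π.hasBidir
  left_chain := π.left_chain
  right_chain := π.right_chain.append hl <| by
    simpa [List.getLast?_eq_some_getLast π.right_ne, target] using hjoin
  head_cond := by simpa [List.head_append_of_ne_nil π.right_ne] using π.head_cond

section appendRight

variable (π : G.Trek) (l : List V) (hl : l.IsChain fun a b => (a, b) ∈ G.D)
  (hjoin : ∀ y ∈ l.head?, (π.target, y) ∈ G.D)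

@[simp] lemma appendRight_source : (π.appendRight l hl hjoin).source = π.source := rfl

lemma appendRight_target (hne : l ≠ []) : (π.appendRight l hl hjoin).target = l.getLast hne :=
  List.getLast_append_of_ne_nil _ hne

lemma IsHalfTrek.appendRight (h : π.IsHalfTrek) :
    (π.appendRight l hl hjoin).IsHalfTrek := h

lemma length_le_nEdges_appendRight : l.length ≤ (π.appendRight l hl hjoin).nEdges := by
  have := List.length_pos_iff.2 π.right_ne
  simp only [nEdges, Trek.appendRight, List.length_append]
  omega

end appendRight

def toHalfTrek (π : G.Trek) : G.Trek where
  left := [π.top]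
  right := π.right
  left_ne := List.cons_ne_nil _ _
  right_ne := π.right_ne
  hasBidir := π.hasBidir
  left_chain := List.isChain_singleton _
  right_chain := π.right_chain
  head_cond := π.head_cond

@[simp] lemma toHalfTrek_source (π : G.Trek) : π.toHalfTrek.source = π.top := rfl

@[simp] lemma toHalfTrek_target (π : G.Trek) : π.toHalfTrek.target = π.target := rfl

@[simp] lemma toHalfTrek_rightSet (π : G.Trek) : π.toHalfTrek.rightSet = π.rightSet := rfl

lemma isHalfTrek_toHalfTrek (π : G.Trek) : π.toHalfTrek.IsHalfTrek := rfl

lemma toHalfTrek_leftSet_subset (π : G.Trek) : π.toHalfTrek.leftSet ⊆ π.leftSet := by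
  simpa [toHalfTrek, leftSet] using π.top_mem_leftSet

end Trek

open Trek

lemma exists_halfTrek_of_eq_or_mem_sib_or_mem_htr {v t : V}
    (h : t = v ∨ t ∈ G.sib v ∨ t ∈ G.htr v) :
    ∃ ρ : G.Trek, ρ.IsHalfTrek ∧ ρ.source = v ∧ ρ.target = t := by
  rcases h with rfl | hsib | ⟨-, -, ρ, hsrc, htgt, hhalf, -⟩
  · exact ⟨⟨[t], [t], List.cons_ne_nil _ _, List.cons_ne_nil _ _, false,
      List.isChain_singleton _, List.isChain_singleton _, rfl⟩, rfl, rfl, rfl⟩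
  · exact ⟨⟨[v], [t], List.cons_ne_nil _ _, List.cons_ne_nil _ _, true,
      List.isChain_singleton _, List.isChain_singleton _, G.B_symm _ _ (mem_sib.1 hsib)⟩,
      rfl, rfl, rfl⟩
  · exact ⟨ρ, hhalf, hsrc, htgt⟩

-- The witness is `ρ` followed by the left-hand side of `π`, read downwards from its top.
lemma source_mem_htr_of_halfTrek_to_top {v : V} {ρ π : G.Trek} (hρ : ρ.IsHalfTrek)
    (hsrc : ρ.source = v) (htgt : ρ.target = π.top) (htop : π.top ≠ π.source)
    (hv : π.source ≠ v) (hsib : π.source ∉ G.sib v) : π.source ∈ G.htr v := by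
  have hne := tail_left_ne_nil_of_top_ne_source htop
  refine ⟨hv, hsib, ρ.appendRight π.left.tail π.left_chain.tail fun y hy =>
    htgt ▸ π.rel_top_of_mem_head?_tail hy, hsrc, ?_, hρ.appendRight .., ?_⟩
  · rw [appendRight_target _ _ _ _ hne, List.getLast_tail]
    rfl
  · exact (List.length_pos_iff.2 hne).trans_le (length_le_nEdges_appendRight ..)

lemma Trek.top_eq_source_or_of_not_mem_htr {v : V} (π : G.Trek) (hv : π.source ≠ v)
    (hsib : π.source ∉ G.sib v) (hhtr : π.source ∉ G.htr v) :
    π.top = π.source ∨ (π.top ≠ v ∧ π.top ∉ G.sib v ∧ π.top ∉ G.htr v) := by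
  refine or_iff_not_imp_left.2 fun htop => ?_
  simp only [← not_or]
  intro h
  obtain ⟨ρ, hρ, hsrc, htgt⟩ := exists_halfTrek_of_eq_or_mem_sib_or_mem_htr h
  exact hhtr (source_mem_htr_of_halfTrek_to_top hρ hsrc htgt htop hv hsib)

section TrekSystem

variable {Y P : Finset V} {f : V → G.Trek}

lemma NoSidedIntersection.injOn_top (hn : G.NoSidedIntersection Y f) :
    Set.InjOn (fun y => (f y).top) Y := by
  intro y hy y' hy' heq
  by_contra hne
  exact Finset.disjoint_left.1 (hn y hy y' hy' hne).1 (f y).top_mem_leftSet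
    (by rw [show (f y).top = (f y').top from heq]; exact (f y').top_mem_leftSet)

lemma NoSidedIntersection.exists_halfTrekSystem [Nonempty V] (hsys : G.IsTrekSystem Y P f)
    (hn : G.NoSidedIntersection Y f) :
    ∃ g : V → G.Trek, (∀ t ∈ Y.image fun y => (f y).top, (g t).IsHalfTrek) ∧
      G.IsTrekSystem (Y.image fun y => (f y).top) P g ∧
      G.NoSidedIntersection (Y.image fun y => (f y).top) g := by
  obtain ⟨hsrc, himg, htgt⟩ := hsys
  let g : V → G.Trek := fun t => (f (Function.invFunOn (fun y => (f y).top) Y t)).toHalfTrek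
  have hg : ∀ y ∈ Y, g (f y).top = (f y).toHalfTrek := fun y hy => by
    simp only [g, hn.injOn_top.leftInvOn_invFunOn hy]
  refine ⟨g, Finset.forall_mem_image.2 fun y hy => hg y hy ▸ isHalfTrek_toHalfTrek _,
    ⟨Finset.forall_mem_image.2 fun y hy => by rw [hg y hy]; rfl, ?_, ?_⟩, ?_⟩
  · rw [Finset.image_image, ← himg]
    exact Finset.image_congr fun y hy => by simp [hg y hy]
  · simp only [Finset.forall_mem_image]
    intro y hy y' hy' hne
    rw [hg y hy, hg y' hy']
    exact htgt y hy y' hy' fun h => hne (h ▸ rfl)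
  · simp only [NoSidedIntersection, Finset.forall_mem_image]
    intro y hy y' hy' hne
    have hyy' : y ≠ y' := fun h => hne (h ▸ rfl)
    rw [hg y hy, hg y' hy', toHalfTrek_rightSet, toHalfTrek_rightSet]
    exact ⟨((hn y hy y' hy' hyy').1.mono_left (toHalfTrek_leftSet_subset _)).mono_right
      (toHalfTrek_leftSet_subset _), (hn y hy y' hy' hyy').2⟩

end TrekSystem

lemma SatisfiesHTC.satisfiesWeakHTC {v : V} {Y : Finset V} (h : G.SatisfiesHTC v Y) :
    G.SatisfiesWeakHTC v Y :=
  let ⟨hcard, hY, f, hhalf, hsys, hn⟩ := h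
  ⟨hcard, hY, f, fun y hy _ => hhalf y hy, hsys, hn⟩

lemma SatisfiesHTC.mem_htr {w u : V} {Y : Finset V} (h : G.SatisfiesHTC w Y) (hu : u ∈ Y) :
    w ∈ G.htr u := by
  obtain ⟨-, hY, f, hhalf, ⟨hsrc, himg, -⟩, -⟩ := h
  have hpa : (f u).target ∈ G.pa w := himg ▸ Finset.mem_image_of_mem _ hu
  refine ⟨(hY u hu).1.symm, fun hw => (hY u hu).2 (mem_sib.2 (G.B_symm _ _ (mem_sib.1 hw))),
    (f u).appendRight [w] (List.isChain_singleton _) (by simpa using hpa), hsrc u hu,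
    appendRight_target _ _ _ _ (List.cons_ne_nil _ _), (hhalf u hu).appendRight ..,
    length_le_nEdges_appendRight (f u) [w] _ _⟩

theorem SatisfiesWeakHTC.exists_satisfiesHTC {v : V} {Y : Finset V}
    (h : G.SatisfiesWeakHTC v Y) :
    ∃ Y', G.SatisfiesHTC v Y' ∧ ∀ w ∈ Y', w ∈ G.htr v → w ∈ Y := by
  obtain ⟨hcard, hY, f, hhalf, hsys, hn⟩ := h
  have : Nonempty V := ⟨v⟩
  obtain ⟨g, hg_half, hg_sys, hg_n⟩ := hn.exists_halfTrekSystem hsys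
  have htop : ∀ y ∈ Y, (f y).top = y ∨
      ((f y).top ≠ v ∧ (f y).top ∉ G.sib v ∧ (f y).top ∉ G.htr v) := by
    intro y hy
    by_cases hyh : y ∈ G.htr v
    · exact .inl ((hhalf y hy hyh).top_eq_source.trans (hsys.1 y hy))
    · have hsrc := hsys.1 y hy
      simpa only [hsrc] using (f y).top_eq_source_or_of_not_mem_htr (v := v)
        (by rw [hsrc]; exact (hY y hy).1) (by rw [hsrc]; exact (hY y hy).2) (by rwa [hsrc])
  refine ⟨Y.image fun y => (f y).top, ⟨?_, ?_, g, hg_half, hg_sys, hg_n⟩, ?_⟩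
  · rw [Finset.card_image_of_injOn hn.injOn_top, hcard]
  · rw [Finset.forall_mem_image]
    intro y hy
    rcases htop y hy with h | h
    · rw [h]; exact hY y hy
    · exact ⟨h.1, h.2.1⟩
  · rw [Finset.forall_mem_image]
    intro y hy hyh
    rcases htop y hy with h | h
    · rwa [h]
    · exact absurd hyh h.2.2

end MixedGraph

/-- **Weak HTC**: the weak half-trek criterion proves a graph rationally identifiable
(resp. generically infinite-to-one) if and only if the graph is HTC-identifiable
(resp. HTC-infinite-to-one). -/
theorem weak_htc_equivalence {V : Type*} [Fintype V] [DecidableEq V] (G : MixedGraph V) :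
    ((∃ Y : V → Finset V, (∀ v, G.SatisfiesWeakHTC v (Y v)) ∧
        ∃ r : V → V → Prop, IsStrictTotalOrder V r ∧
          ∀ v w, w ∈ Y v → w ∈ G.htr v → r w v) ↔
      G.HTCIdentifiable) ∧
    ((∀ Y : V → Finset V,
        (∃ v, ¬ G.SatisfiesWeakHTC v (Y v)) ∨ ∃ v w, v ∈ Y w ∧ w ∈ Y v) ↔
      G.HTCInfiniteToOne) := by
  constructor
  · constructor
    · rintro ⟨Y, hY, r, hr, hord⟩
      choose Y' hY' hsub using fun v => (hY v).exists_satisfiesHTC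
      exact ⟨Y', hY', r, hr, fun v w hw hwh => hord v w (hsub v w hw hwh) hwh⟩
    · rintro ⟨Y, hY, r, hr, hord⟩
      exact ⟨Y, fun v => (hY v).satisfiesWeakHTC, r, hr, hord⟩
  · constructor
    · intro h Y
      exact (h Y).imp_left fun ⟨v, hv⟩ => ⟨v, mt MixedGraph.SatisfiesHTC.satisfiesWeakHTC hv⟩
    · intro h Y
      by_cases hall : ∀ v, G.SatisfiesWeakHTC v (Y v)
      · choose Y' hY' hsub using fun v => (hall v).exists_satisfiesHTC
        obtain ⟨v, w, hvw, hwv⟩ := (h Y').resolve_left fun ⟨v, hv⟩ => hv (hY' v)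
        exact .inr ⟨v, w, hsub w v hvw ((hY' v).mem_htr hwv), hsub v w hwv ((hY' w).mem_htr hvw)⟩
      · exact .inl (not_forall.1 hall)
end

section
/- Given a mixed graph G=(V,D,B), a node v∈V and a subset of allowed nodes A⊆V∖({v}∪sib(v)), there exists a set Y⊆A satisfying the half-trek criterion with respect to v if and only if the maximum number of directed paths from s to t in the flow network G_flow(v,A) that are pairwise vertex-disjoint except at the common endpoints s and t equals |pa(v)|. -/
open scoped Classical Matrix

/-- There exist `k` directed paths from `s` to `t` in the network with edge relation `E`
that are pairwise vertex-disjoint except at the common endpoints `s` and `t` (each path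
being simple). -/
def HasDisjointPaths {N : Type*} (E : N → N → Prop) (s t : N) (k : ℕ) : Prop :=
  ∃ P : Fin k → List N,
    (∀ i, (P i).Chain' E ∧ (P i).head? = some s ∧ (P i).getLast? = some t ∧
      2 ≤ (P i).length ∧ (P i).Nodup) ∧
    ∀ i j, i ≠ j → ∀ x ∈ ((P i).drop 1).dropLast, x ∉ ((P j).drop 1).dropLast

/-- Nodes of the flow network `G_flow(v, A)`: a source, a sink, a left-hand copy `L a`
for each `a ∈ A`, and a right-hand copy `R w` for each `w ∈ V`. -/
inductive FlowNode1 (V : Type*) where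
  | s : FlowNode1 V
  | t : FlowNode1 V
  | L : V → FlowNode1 V
  | R : V → FlowNode1 V

/-- Edges of the flow network `G_flow(v, A)`. -/
def flowEdge1 {V : Type*} [Fintype V] [DecidableEq V] (G : MixedGraph V) (v : V)
    (A : Finset V) : FlowNode1 V → FlowNode1 V → Prop
  | FlowNode1.s, FlowNode1.L a => a ∈ A
  | FlowNode1.L a, FlowNode1.R w => a ∈ A ∧ (w = a ∨ (a, w) ∈ G.B)
  | FlowNode1.R w, FlowNode1.R u => (w, u) ∈ G.D
  | FlowNode1.R w, FlowNode1.t => w ∈ G.pa v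
  | _, _ => False

/-! An `s`–`t` path in `G_flow(v, A)` has the shape `s, L a, R x₁, …, R xₙ, t`, and this is
exactly a half-trek from `a ∈ A` to the parent `xₙ` of `v` with left side `{a}` and right side
`{x₁, …, xₙ}` (its top edge being `a ↔ x₁`, or `a = x₁`). Two such paths are disjoint away from
`s` and `t` iff the half-treks have distinct sources and disjoint right sides, i.e. no sided
intersection. So half-trek systems from `Y ⊆ A` to `pa(v)` and families of `|pa(v)|` disjoint
paths determine each other (after shortcutting repeated nodes on the right sides), and no family
of disjoint paths is larger than `|pa(v)|`, since distinct paths end in distinct parents of `v`.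
-/

theorem List.IsChain.exists_nodup_subset {α : Type*} {R : α → α → Prop} :
    ∀ {l : List α}, l.IsChain R → ∃ l' : List α, l'.Nodup ∧ l'.IsChain R ∧
      l'.head? = l.head? ∧ l'.getLast? = l.getLast? ∧ l' ⊆ l
  | [], _ => ⟨[], by simp⟩
  | x :: l, h => by
    have hl : l.IsChain R := h.tail
    obtain ⟨l', hnd, hch, hhd, hlast, hsub⟩ := hl.exists_nodup_subset
    by_cases hx : x ∈ l'
    · obtain ⟨p, q, rfl⟩ := List.append_of_mem hx
      have hsuf : x :: q <:+ p ++ x :: q := List.suffix_append _ _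
      refine ⟨x :: q, hnd.sublist hsuf.sublist, hch.suffix hsuf, rfl, ?_,
        fun y hy => List.mem_cons_of_mem _ (hsub (hsuf.subset hy))⟩
      rw [List.getLast?_append_cons, List.getLast?_cons] at hlast
      rw [List.getLast?_cons, List.getLast?_cons, ← hlast]
      rfl
    · refine ⟨x :: l', List.nodup_cons.2 ⟨hx, hnd⟩, ?_, rfl, ?_, List.cons_subset_cons _ hsub⟩
      · exact List.isChain_cons.2 ⟨fun y hy => (List.isChain_cons.1 h).1 y (hhd ▸ hy), hch⟩
      · rw [List.getLast?_cons, List.getLast?_cons, hlast]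

section FlowPath

variable {V : Type*}

def flowPath (a : V) (rs : List V) : List (FlowNode1 V) :=
  .s :: .L a :: (rs.map FlowNode1.R ++ [FlowNode1.t])

theorem flowPath_interior (a : V) (rs : List V) :
    ((flowPath a rs).drop 1).dropLast = .L a :: rs.map FlowNode1.R := by
  rw [flowPath, List.drop_one, List.tail_cons, ← List.cons_append, List.dropLast_concat]

theorem nodup_flowPath_iff {a : V} {rs : List V} : (flowPath a rs).Nodup ↔ rs.Nodup := by
  simp [flowPath, List.nodup_append, List.nodup_map_iff (fun _ _ => FlowNode1.R.inj)]

theorem flowPath_interior_disjoint_iff [DecidableEq V] {a a' : V} {rs rs' : List V} :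
    (∀ x ∈ ((flowPath a rs).drop 1).dropLast, x ∉ ((flowPath a' rs').drop 1).dropLast) ↔
      a ≠ a' ∧ Disjoint rs.toFinset rs'.toFinset := by
  rw [flowPath_interior, flowPath_interior]
  simp only [List.mem_cons, List.mem_map, Finset.disjoint_left, List.mem_toFinset]
  grind

variable [Fintype V] [DecidableEq V] {G : MixedGraph V} {v : V} {A : Finset V}

theorem isChain_map_R_append_t_iff {rs : List V} (h : rs ≠ []) :
    (rs.map FlowNode1.R ++ [FlowNode1.t]).IsChain (flowEdge1 G v A) ↔
      rs.IsChain (fun x y => (x, y) ∈ G.D) ∧ rs.getLast h ∈ G.pa v := by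
  rw [List.isChain_append, List.isChain_map]
  simp [flowEdge1, List.getLast?_map, List.getLast?_eq_some_getLast h]

theorem isChain_flowPath_iff {a : V} {rs : List V} :
    (flowPath a rs).IsChain (flowEdge1 G v A) ↔ a ∈ A ∧ ∃ h : rs ≠ [],
      (rs.head h = a ∨ (a, rs.head h) ∈ G.B) ∧ rs.IsChain (fun x y => (x, y) ∈ G.D) ∧
        rs.getLast h ∈ G.pa v := by
  rcases rs with _ | ⟨x, rs⟩
  · simp [flowPath, flowEdge1]
  · rw [flowPath, List.isChain_cons_cons, List.isChain_cons,
      isChain_map_R_append_t_iff (List.cons_ne_nil x rs)]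
    simp [flowEdge1]
    tauto

theorem exists_eq_map_R_append_t :
    ∀ {x : V} {Q : List (FlowNode1 V)}, (.R x :: Q).IsChain (flowEdge1 G v A) →
      (.R x :: Q).getLast? = some .t → ∃ rs : List V, .R x :: Q = rs.map FlowNode1.R ++ [FlowNode1.t]
  | _, [], _, ht => by simp at ht
  | _, .s :: _, hc, _ | _, .L _ :: _, hc, _ => (List.isChain_cons_cons.1 hc).1.elim
  | x, [.t], _, _ => ⟨[x], rfl⟩
  | _, .t :: _ :: _, hc, _ => (List.isChain_cons_cons.1 (List.isChain_cons_cons.1 hc).2).1.elim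
  | x, .R _ :: _, hc, ht => by
    obtain ⟨rs, hrs⟩ := exists_eq_map_R_append_t (List.isChain_cons_cons.1 hc).2
      (by rwa [List.getLast?_cons_cons] at ht)
    exact ⟨x :: rs, by rw [hrs]; rfl⟩

theorem exists_eq_flowPath {P : List (FlowNode1 V)} (hP : P.IsChain (flowEdge1 G v A))
    (hs : P.head? = some .s) (ht : P.getLast? = some .t) : ∃ a rs, P = flowPath a rs := by
  obtain ⟨P, rfl⟩ : ∃ P', P = .s :: P' := by rcases P with _ | ⟨_, P⟩ <;> simp_all
  rcases P with _ | ⟨z, P⟩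
  · simp at ht
  have hsz := (List.isChain_cons_cons.1 hP).1
  cases z <;> try exact hsz.elim
  rename_i a
  rcases P with _ | ⟨z, P⟩
  · simp at ht
  have haz := (List.isChain_cons_cons.1 (List.isChain_cons_cons.1 hP).2).1
  cases z <;> try exact haz.elim
  obtain ⟨rs, hrs⟩ := exists_eq_map_R_append_t
    (List.isChain_cons_cons.1 (List.isChain_cons_cons.1 hP).2).2
    (by rwa [List.getLast?_cons_cons, List.getLast?_cons_cons] at ht)
  exact ⟨a, rs, by rw [flowPath, ← hrs]⟩

end FlowPath

namespace MixedGraph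

variable {V : Type*} [Fintype V] [DecidableEq V] {G : MixedGraph V}

namespace Trek

def refl (w : V) : G.Trek :=
  ⟨[w], [w], List.cons_ne_nil _ _, List.cons_ne_nil _ _, false, List.isChain_singleton _,
    List.isChain_singleton _, rfl⟩

def mkHalf (a : V) (rs : List V) (hne : rs ≠ []) (hch : rs.IsChain fun x y => (x, y) ∈ G.D)
    (hhead : rs.head hne = a ∨ (a, rs.head hne) ∈ G.B) : G.Trek where
  left := [a]
  right := rs
  left_ne := List.cons_ne_nil _ _
  right_ne := hne
  hasBidir := decide (rs.head hne ≠ a)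
  left_chain := List.isChain_singleton _
  right_chain := hch
  head_cond := by by_cases h : rs.head hne = a <;> simp_all

theorem isHalfTrek_mkHalf {a : V} {rs : List V} {hne hch hhead} :
    (mkHalf (G := G) a rs hne hch hhead).IsHalfTrek := by
  simp [mkHalf, IsHalfTrek, leftSet]

theorem IsHalfTrek.leftSet_eq {π : G.Trek} (hπ : π.IsHalfTrek) : π.leftSet = {π.source} := by
  obtain ⟨c, hc⟩ := Finset.card_eq_one.1 hπ
  have hsource : π.source ∈ π.leftSet := List.mem_toFinset.2 (List.getLast_mem _)
  rw [hc, Finset.mem_singleton] at hsource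
  rw [hc, hsource]

theorem IsHalfTrek.head_right {π : G.Trek} (hπ : π.IsHalfTrek) :
    π.right.head π.right_ne = π.source ∨ (π.source, π.right.head π.right_ne) ∈ G.B := by
  have hhead : π.left.head π.left_ne ∈ π.leftSet := List.mem_toFinset.2 (List.head_mem _)
  rw [hπ.leftSet_eq, Finset.mem_singleton] at hhead
  have hcond := π.head_cond
  rw [hhead] at hcond
  cases hb : π.hasBidir
  · rw [hb] at hcond
    exact Or.inl hcond.symm
  · rw [hb] at hcond
    exact Or.inr hcond

theorem IsHalfTrek.exists_nodup_right {π : G.Trek} (hπ : π.IsHalfTrek) :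
    ∃ π' : G.Trek, π'.IsHalfTrek ∧ π'.source = π.source ∧ π'.target = π.target ∧
      π'.rightSet ⊆ π.rightSet ∧ π'.right.Nodup := by
  obtain ⟨rs, hnd, hch, hhd, hlast, hsub⟩ := π.right_chain.exists_nodup_subset
  have hne : rs ≠ [] := by rintro rfl; simp [List.head?_eq_some_head π.right_ne] at hhd
  have hhead : rs.head hne = π.right.head π.right_ne := by
    simpa [List.head?_eq_some_head hne, List.head?_eq_some_head π.right_ne] using hhd
  refine ⟨mkHalf π.source rs hne hch (hhead ▸ hπ.head_right), isHalfTrek_mkHalf, rfl, ?_,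
    fun x hx => List.mem_toFinset.2 (hsub (List.mem_toFinset.1 hx)), hnd⟩
  show rs.getLast hne = π.right.getLast π.right_ne
  simpa [List.getLast?_eq_some_getLast hne, List.getLast?_eq_some_getLast π.right_ne] using hlast

end Trek

/-- The left side of a half-trek is the singleton of its source, so distinct sources is what
no sided intersection asks of the left sides. -/
structure IsDisjointHalfTrekFamily {ι : Type*} (A P : Finset V) (τ : ι → G.Trek) : Prop where
  isHalfTrek : ∀ i, (τ i).IsHalfTrek
  source_mem : ∀ i, (τ i).source ∈ A
  target_mem : ∀ i, (τ i).target ∈ P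
  injective_source : Function.Injective fun i => (τ i).source
  disjoint_rightSet : Pairwise fun i j => Disjoint (τ i).rightSet (τ j).rightSet

namespace IsDisjointHalfTrekFamily

variable {ι ι' : Type*} {A P : Finset V} {τ : ι → G.Trek}

theorem comp (hτ : IsDisjointHalfTrekFamily A P τ) {e : ι' → ι} (he : Function.Injective e) :
    IsDisjointHalfTrekFamily A P (τ ∘ e) where
  isHalfTrek i := hτ.isHalfTrek (e i)
  source_mem i := hτ.source_mem (e i)
  target_mem i := hτ.target_mem (e i)
  injective_source := hτ.injective_source.comp he
  disjoint_rightSet _ _ hij := hτ.disjoint_rightSet (he.ne hij)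

theorem injective_target (hτ : IsDisjointHalfTrekFamily A P τ) :
    Function.Injective fun i => (τ i).target := by
  intro i j hij
  by_contra hne
  have hi : (τ i).target ∈ (τ i).rightSet := List.mem_toFinset.2 (List.getLast_mem _)
  have hj : (τ j).target ∈ (τ j).rightSet := List.mem_toFinset.2 (List.getLast_mem _)
  rw [← show (τ i).target = (τ j).target from hij] at hj
  exact Finset.disjoint_left.1 (hτ.disjoint_rightSet hne) hi hj

theorem card_le [Fintype ι] (hτ : IsDisjointHalfTrekFamily A P τ) : Fintype.card ι ≤ P.card :=
  calc Fintype.card ι = (Finset.univ.image fun i => (τ i).target).card :=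
        (Finset.card_image_of_injective _ hτ.injective_target).symm
    _ ≤ P.card := Finset.card_le_card (by simpa [Finset.subset_iff] using hτ.target_mem)

theorem exists_nodup_right (hτ : IsDisjointHalfTrekFamily A P τ) :
    ∃ τ' : ι → G.Trek, IsDisjointHalfTrekFamily A P τ' ∧ ∀ i, (τ' i).right.Nodup := by
  choose τ' hhalf hsrc htgt hsub hnd using fun i => (hτ.isHalfTrek i).exists_nodup_right
  refine ⟨τ', ⟨hhalf, fun i => hsrc i ▸ hτ.source_mem i, fun i => htgt i ▸ hτ.target_mem i,
    fun i j h => hτ.injective_source (by simpa [hsrc] using h), fun i j hij => ?_⟩, hnd⟩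
  exact (hτ.disjoint_rightSet hij).mono (hsub i) (hsub j)

end IsDisjointHalfTrekFamily

variable {v : V} {A : Finset V}

theorem SatisfiesHTC.exists_isDisjointHalfTrekFamily {Y : Finset V} (hY : G.SatisfiesHTC v Y)
    (hYA : Y ⊆ A) : ∃ τ : Fin (G.pa v).card → G.Trek, IsDisjointHalfTrekFamily A (G.pa v) τ := by
  obtain ⟨hcard, -, f, hhalf, ⟨hsrc, himg, -⟩, hnsi⟩ := hY
  have hfam : IsDisjointHalfTrekFamily A (G.pa v) fun y : Y => f y :=
    { isHalfTrek y := hhalf y y.2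
      source_mem y := by rw [hsrc y y.2]; exact hYA y.2
      target_mem y := himg ▸ Finset.mem_image_of_mem _ y.2
      injective_source y y' h := Subtype.ext (by simpa [hsrc y y.2, hsrc y' y'.2] using h)
      disjoint_rightSet y y' hne := (hnsi y y.2 y' y'.2 (Subtype.coe_ne_coe.2 hne)).2 }
  exact ⟨_, hfam.comp (Y.equivFin.trans (finCongr hcard)).symm.injective⟩

theorem satisfiesHTC_image_source {ι : Type*} [Fintype ι] (hA : ∀ a ∈ A, a ≠ v ∧ a ∉ G.sib v)
    {τ : ι → G.Trek} (hτ : IsDisjointHalfTrekFamily A (G.pa v) τ)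
    (hcard : Fintype.card ι = (G.pa v).card) :
    G.SatisfiesHTC v (Finset.univ.image fun i => (τ i).source) := by
  set f : V → G.Trek := Function.extend (fun i => (τ i).source) τ Trek.refl
  have hf : ∀ i, f (τ i).source = τ i := hτ.injective_source.extend_apply _ _
  have htargets : (Finset.univ.image fun i => (τ i).source).image (fun y => (f y).target) =
      G.pa v := by
    rw [Finset.image_image]
    refine Finset.eq_of_subset_of_card_le (by simpa [Finset.subset_iff, hf] using hτ.target_mem) ?_
    rw [Finset.card_image_of_injective _ (by simpa [Function.comp_def, hf] using
      hτ.injective_target)]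
    simp [hcard]
  refine ⟨by rw [Finset.card_image_of_injective _ hτ.injective_source]; simp [hcard],
    by simpa using fun i => hA _ (hτ.source_mem i), f, by simpa [hf] using hτ.isHalfTrek,
    ⟨by simp [hf], htargets, ?_⟩, ?_⟩
  · simp only [Finset.forall_mem_image, Finset.mem_univ, forall_const, hf]
    exact fun i j hne => hτ.injective_target.ne fun h => hne (by rw [h])
  · simp only [NoSidedIntersection, Finset.forall_mem_image, Finset.mem_univ, forall_const, hf]
    intro i j hne
    rw [(hτ.isHalfTrek i).leftSet_eq, (hτ.isHalfTrek j).leftSet_eq]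
    exact ⟨Finset.disjoint_singleton.2 hne, hτ.disjoint_rightSet fun h => hne (by rw [h])⟩

theorem isFlowPath_iff {P : List (FlowNode1 V)} :
    (P.IsChain (flowEdge1 G v A) ∧ P.head? = some .s ∧ P.getLast? = some .t) ↔
      ∃ π : G.Trek, π.IsHalfTrek ∧ π.source ∈ A ∧ π.target ∈ G.pa v ∧
        P = flowPath π.source π.right := by
  constructor
  · rintro ⟨hc, hs, ht⟩
    obtain ⟨a, rs, rfl⟩ := exists_eq_flowPath hc hs ht
    obtain ⟨ha, hne, hhead, hch, hlast⟩ := isChain_flowPath_iff.1 hc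
    exact ⟨.mkHalf a rs hne hch hhead, Trek.isHalfTrek_mkHalf, ha, hlast, rfl⟩
  · rintro ⟨π, hπ, hsrc, htgt, rfl⟩
    exact ⟨isChain_flowPath_iff.2 ⟨hsrc, π.right_ne, hπ.head_right, π.right_chain, htgt⟩, rfl,
      by simp [flowPath, List.getLast?_cons, List.getLast?_append]⟩

theorem hasDisjointPaths_iff {k : ℕ} :
    HasDisjointPaths (flowEdge1 G v A) .s .t k ↔
      ∃ τ : Fin k → G.Trek, IsDisjointHalfTrekFamily A (G.pa v) τ ∧ ∀ i, (τ i).right.Nodup := by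
  constructor
  · rintro ⟨P, hP, hdisj⟩
    choose τ hhalf hsrc htgt hPτ using
      fun i => isFlowPath_iff.1 ⟨(hP i).1, (hP i).2.1, (hP i).2.2.1⟩
    have hint i j (hij : i ≠ j) :=
      flowPath_interior_disjoint_iff.1 (hPτ i ▸ hPτ j ▸ hdisj i j hij)
    refine ⟨τ, ⟨hhalf, hsrc, htgt, fun i j h => ?_, fun i j hij => (hint i j hij).2⟩,
      fun i => nodup_flowPath_iff.1 (hPτ i ▸ (hP i).2.2.2.2)⟩
    by_contra hij
    exact (hint i j hij).1 h
  · rintro ⟨τ, hτ, hnd⟩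
    refine ⟨fun i => flowPath (τ i).source (τ i).right, fun i => ?_, fun i j hij => ?_⟩
    · obtain ⟨hc, hs, ht⟩ := isFlowPath_iff.2
        ⟨τ i, hτ.isHalfTrek i, hτ.source_mem i, hτ.target_mem i, rfl⟩
      exact ⟨hc, hs, ht, by simp [flowPath], nodup_flowPath_iff.2 (hnd i)⟩
    · exact flowPath_interior_disjoint_iff.2
        ⟨hτ.injective_source.ne hij, hτ.disjoint_rightSet hij⟩

end MixedGraph

/-- There is a set `Y ⊆ A` satisfying the half-trek criterion with respect to `v` if and
only if the maximum number of directed `s`–`t` paths in `G_flow(v, A)` that are pairwise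
vertex-disjoint except at `s` and `t` equals `|pa(v)|`. -/
theorem htc_maxflow {V : Type*} [Fintype V] [DecidableEq V] (G : MixedGraph V)
    (v : V) (A : Finset V) (hA : ∀ a ∈ A, a ≠ v ∧ a ∉ G.sib v) :
    (∃ Y ⊆ A, G.SatisfiesHTC v Y) ↔
      (HasDisjointPaths (flowEdge1 G v A) FlowNode1.s FlowNode1.t (G.pa v).card ∧
        ∀ k, HasDisjointPaths (flowEdge1 G v A) FlowNode1.s FlowNode1.t k →
          k ≤ (G.pa v).card) := by
  constructor
  · rintro ⟨Y, hYA, hY⟩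
    obtain ⟨τ, hτ⟩ := hY.exists_isDisjointHalfTrekFamily hYA
    refine ⟨MixedGraph.hasDisjointPaths_iff.2 hτ.exists_nodup_right, fun k hk => ?_⟩
    obtain ⟨τ', hτ', -⟩ := MixedGraph.hasDisjointPaths_iff.1 hk
    simpa using hτ'.card_le
  · rintro ⟨h, -⟩
    obtain ⟨τ, hτ, -⟩ := MixedGraph.hasDisjointPaths_iff.1 h
    exact ⟨_, by simpa [Finset.subset_iff] using hτ.source_mem,
      MixedGraph.satisfiesHTC_image_source hA hτ (Fintype.card_fin _)⟩
end
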